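/- Order-2 consistency of the Perego–Veneziani (RL₂) scheme for a scalar ODE: let y solve y' = a(t,y)y + b(t,y) with a, b of class C² and bounded derivatives. Set a_j = a(t_j, y(t_j)), b_j = b(t_j, y(t_j)), α_n = (3/2)a_n − (1/2)a_{n−1}, β_n = (3/2)b_n − (1/2)b_{n−1}, and y_{n+1} = y(t_n) + h φ_1(α_n h)(α_n y(t_n) + β_n). Then |y_{n+1} − y(t_n + h)| ≤ C h³ where C depends only on a, b, y₀ and T. -/

import Mathlib

open Set

private lemma itdw_eq {N : ℕ} {f : ℝ → ℝ} {s : Set ℝ} (hs : UniqueDiffOn ℝ s)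
    (hf : ContDiff ℝ N f) :
    ∀ n : ℕ, n ≤ N → ∀ x ∈ s, iteratedDerivWithin n f s x = iteratedDeriv n f x := by
  intro n
  induction n with
  | zero => intro _ x hx; simp [iteratedDerivWithin_zero, iteratedDeriv_zero]
  | succ m ih =>
    intro hm x hx
    rw [iteratedDerivWithin_succ, iteratedDeriv_succ]
    rw [derivWithin_congr (fun t ht => ih (by omega) t ht) (ih (by omega) x hx)]
    exact (hf.differentiable_iteratedDeriv m
      (by exact_mod_cast by omega)).differentiableAt.derivWithin (hs x hx)

private lemma taylor2_bound {g : ℝ → ℝ} {u v M : ℝ} (huv : u < v) (hg : ContDiff ℝ 3 g)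
    (hM : ∀ t ∈ Icc u v, |iteratedDeriv 3 g t| ≤ M) :
    |g v - g u - (v - u) * deriv g u - (v - u) ^ 2 / 2 * iteratedDeriv 2 g u| ≤
      M * (v - u) ^ 3 / 2 := by
  have hs := uniqueDiffOn_Icc huv
  have h1 := taylor_mean_remainder_bound (n := 2) huv.le (hg.contDiffOn)
    (right_mem_Icc.mpr huv.le)
    (fun y hy => by rw [itdw_eq hs hg 3 le_rfl y hy]; exact hM y hy)
  rw [taylor_within_apply] at h1
  simp only [Finset.sum_range_succ, Finset.sum_range_zero] at h1
  rw [itdw_eq hs hg 0 (by norm_num) u (left_mem_Icc.mpr huv.le),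
      itdw_eq hs hg 1 (by norm_num) u (left_mem_Icc.mpr huv.le),
      itdw_eq hs hg 2 (by norm_num) u (left_mem_Icc.mpr huv.le)] at h1
  norm_num [iteratedDeriv_zero, iteratedDeriv_one, Nat.factorial, smul_eq_mul,
    Real.norm_eq_abs] at h1
  calc |g v - g u - (v - u) * deriv g u - (v - u) ^ 2 / 2 * iteratedDeriv 2 g u|
      = |g v - (g u + (v - u) * deriv g u + 1 / 2 * (v - u) ^ 2 * iteratedDeriv 2 g u)| := by
        ring_nf
    _ ≤ M * (v - u) ^ 3 / 2 := h1

private lemma taylor1_bound {g : ℝ → ℝ} {u v M : ℝ} (huv : u < v) (hg : ContDiff ℝ 2 g)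
    (hM : ∀ t ∈ Icc u v, |iteratedDeriv 2 g t| ≤ M) :
    |g v - g u - (v - u) * deriv g u| ≤ M * (v - u) ^ 2 := by
  have hs := uniqueDiffOn_Icc huv
  have h1 := taylor_mean_remainder_bound (n := 1) huv.le (hg.contDiffOn)
    (right_mem_Icc.mpr huv.le)
    (fun y hy => by rw [itdw_eq hs hg 2 le_rfl y hy]; exact hM y hy)
  rw [taylor_within_apply] at h1
  simp only [Finset.sum_range_succ, Finset.sum_range_zero] at h1
  rw [itdw_eq hs hg 0 (by norm_num) u (left_mem_Icc.mpr huv.le),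
      itdw_eq hs hg 1 (by norm_num) u (left_mem_Icc.mpr huv.le)] at h1
  norm_num [iteratedDeriv_zero, iteratedDeriv_one, Nat.factorial, smul_eq_mul,
    Real.norm_eq_abs] at h1
  calc |g v - g u - (v - u) * deriv g u|
      = |g v - (g u + (v - u) * deriv g u)| := by ring_nf
    _ ≤ M * (v - u) ^ 2 := h1

private lemma lip_bound {g : ℝ → ℝ} {u v M : ℝ} (huv : u ≤ v) (hg : Differentiable ℝ g)
    (hM : ∀ t ∈ Icc u v, |deriv g t| ≤ M) : |g v - g u| ≤ M * (v - u) := by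
  have := (convex_Icc u v).norm_image_sub_le_of_norm_deriv_le
    (fun x _ => hg x)
    (fun x hx => by rw [Real.norm_eq_abs]; exact hM x hx)
    (left_mem_Icc.mpr huv) (right_mem_Icc.mpr huv)
  rw [Real.norm_eq_abs, Real.norm_eq_abs, abs_of_nonneg (by linarith : (0:ℝ) ≤ v - u)] at this
  exact this

private lemma iteratedDeriv_exp' (n : ℕ) : iteratedDeriv n Real.exp = Real.exp := by
  rw [iteratedDeriv_eq_iterate, Real.iter_deriv_exp]

private lemma exp_taylor2 {x K : ℝ} (hx : |x| ≤ K) :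
    |Real.exp x - 1 - x - x ^ 2 / 2| ≤ Real.exp K / 2 * |x| ^ 3 := by
  have hK0 : 0 ≤ K := le_trans (abs_nonneg x) hx
  have hK1 : (1:ℝ) ≤ Real.exp K := by
    rw [← Real.exp_zero]; exact Real.exp_le_exp.mpr hK0
  rcases lt_trichotomy x 0 with hneg | rfl | hpos
  · set g : ℝ → ℝ := fun t => Real.exp (-t) with hgdef
    have hgC : ContDiff ℝ 3 g := Real.contDiff_exp.comp contDiff_neg
    have hit : ∀ n t, iteratedDeriv n g t = (-1 : ℝ) ^ n * Real.exp (-t) := by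
      intro n t
      have := iteratedDeriv_comp_neg n Real.exp t
      simpa [hgdef, iteratedDeriv_exp', smul_eq_mul] using this
    have hd : deriv g 0 = -1 := by
      have := hit 1 0; rwa [iteratedDeriv_one, neg_zero, Real.exp_zero, pow_one, mul_one] at this
    have hd2 : iteratedDeriv 2 g 0 = 1 := by
      have := hit 2 0; rw [neg_zero, Real.exp_zero, mul_one] at this; rw [this]; norm_num
    have h1 := taylor2_bound (u := 0) (v := -x) (M := 1) (by linarith) hgC
      (fun t ht => by
        rw [hit 3 t]
        rw [abs_mul, abs_pow, abs_neg, abs_one, one_pow, one_mul, Real.abs_exp]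
        rw [← Real.exp_zero]
        exact Real.exp_le_exp.mpr (by linarith [ht.1]))
    rw [hd, hd2] at h1
    have hg0 : g 0 = 1 := by simp [hgdef]
    have hgx : g (-x) = Real.exp x := by simp [hgdef]
    rw [hg0, hgx] at h1
    calc |Real.exp x - 1 - x - x ^ 2 / 2|
        = |Real.exp x - 1 - (-x - 0) * (-1) - (-x - 0) ^ 2 / 2 * 1| := by ring_nf
      _ ≤ 1 * (-x - 0) ^ 3 / 2 := h1
      _ ≤ Real.exp K / 2 * |x| ^ 3 := by
          rw [abs_of_neg hneg]; nlinarith [pow_pos (neg_pos.mpr hneg) 3]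
  · simp [Real.exp_zero]
  · have h1 := taylor2_bound (u := 0) (v := x) (M := Real.exp K) hpos Real.contDiff_exp
      (fun t ht => by
        rw [iteratedDeriv_exp', Real.abs_exp]
        exact Real.exp_le_exp.mpr (le_trans ht.2 (le_trans (le_abs_self x) hx)))
    rw [iteratedDeriv_exp'] at h1
    have : deriv Real.exp 0 = 1 := by simp
    rw [this, Real.exp_zero] at h1
    calc |Real.exp x - 1 - x - x ^ 2 / 2|
        = |Real.exp x - 1 - (x - 0) * 1 - (x - 0) ^ 2 / 2 * 1| := by ring_nf
      _ ≤ Real.exp K * (x - 0) ^ 3 / 2 := h1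
      _ = Real.exp K / 2 * |x| ^ 3 := by rw [abs_of_pos hpos]; ring

noncomputable def phi1 (x : ℝ) : ℝ := if x = 0 then 1 else (Real.exp x - 1) / x

private lemma phi1_bound {x K : ℝ} (hx : |x| ≤ K) :
    |phi1 x - 1 - x / 2| ≤ Real.exp K / 2 * x ^ 2 := by
  by_cases h0 : x = 0
  · subst h0; simp [phi1]
  · have key : phi1 x - 1 - x / 2 = (Real.exp x - 1 - x - x ^ 2 / 2) / x := by
      rw [phi1, if_neg h0]; field_simp
    rw [key, abs_div]
    rw [div_le_iff₀ (abs_pos.mpr h0)]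
    calc |Real.exp x - 1 - x - x ^ 2 / 2| ≤ Real.exp K / 2 * |x| ^ 3 := exp_taylor2 hx
      _ = Real.exp K / 2 * x ^ 2 * |x| := by
          have : |x| ^ 3 = x ^ 2 * |x| := by
            rcases abs_cases x with ⟨h, _⟩ | ⟨h, _⟩ <;> rw [h] <;> ring
          rw [this]; ring

open Set in
set_option maxHeartbeats 4000000 in
private lemma main_est (A B y : ℝ → ℝ) (T M : ℝ) (h tn : ℝ)
    (hh : 0 < h) (ht1 : h ≤ tn) (ht2 : tn ≤ T - h)
    (hy3 : ContDiff ℝ 3 y) (hA2 : ContDiff ℝ 2 A) (hB2 : ContDiff ℝ 2 B)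
    (hderiv : deriv y = fun t => A t * y t + B t)
    (hM1 : 1 ≤ M)
    (b1 : ∀ t ∈ Icc (0:ℝ) T, |y t| ≤ M) (b2 : ∀ t ∈ Icc (0:ℝ) T, |A t| ≤ M)
    (b3 : ∀ t ∈ Icc (0:ℝ) T, |B t| ≤ M)
    (b5 : ∀ t ∈ Icc (0:ℝ) T, |deriv A t| ≤ M) (b6 : ∀ t ∈ Icc (0:ℝ) T, |deriv B t| ≤ M)
    (b7 : ∀ t ∈ Icc (0:ℝ) T, |iteratedDeriv 2 A t| ≤ M)
    (b8 : ∀ t ∈ Icc (0:ℝ) T, |iteratedDeriv 2 B t| ≤ M)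
    (b9 : ∀ t ∈ Icc (0:ℝ) T, |iteratedDeriv 3 y t| ≤ M) :
    |(y tn + h * phi1 ((3 / 2 * A tn - 1 / 2 * A (tn - h)) * h) *
          ((3 / 2 * A tn - 1 / 2 * A (tn - h)) * y tn +
            (3 / 2 * B tn - 1 / 2 * B (tn - h)))) - y (tn + h)| ≤
      (M / 2 + 2 * M ^ 2 + 8 * Real.exp (M * T) * M ^ 4
        + 3 / 2 * M ^ 3 * (1 + 2 * T)) * h ^ 3 := by
  have hy' : Differentiable ℝ y := hy3.differentiable (by norm_num)
  have hdA1 : ContDiff ℝ 1 (deriv A) := by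
    have hA2'' : ContDiff ℝ (1 + 1) A := by
      rw [show (1 + 1 : WithTop ℕ∞) = 2 by norm_num]; exact hA2
    exact (contDiff_succ_iff_deriv.mp hA2'').2.2
  have hdB1 : ContDiff ℝ 1 (deriv B) := by
    have hB2'' : ContDiff ℝ (1 + 1) B := by
      rw [show (1 + 1 : WithTop ℕ∞) = 2 by norm_num]; exact hB2
    exact (contDiff_succ_iff_deriv.mp hB2'').2.2
  have ht0 : 0 ≤ tn - h := by linarith
  have htT : tn + h ≤ T := by linarith
  have h2T : 2 * h ≤ T := by linarith
  have mtn : tn ∈ Icc (0:ℝ) T := ⟨by linarith, by linarith⟩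
  have mtm : tn - h ∈ Icc (0:ℝ) T := ⟨ht0, by linarith⟩
  set α : ℝ := 3 / 2 * A tn - 1 / 2 * A (tn - h) with hα
  set β : ℝ := 3 / 2 * B tn - 1 / 2 * B (tn - h) with hβ
  set φ : ℝ := phi1 (α * h) with hφ
  set P : ℝ := α * y tn + β with hP
  -- derivative identities at tn
  have hd1 : deriv y tn = A tn * y tn + B tn := by rw [hderiv]
  have hd2 : iteratedDeriv 2 y tn = deriv A tn * y tn + A tn * deriv y tn + deriv B tn := by
    have hF : HasDerivAt (fun t => A t * y t + B t)
        (deriv A tn * y tn + A tn * deriv y tn + deriv B tn) tn := by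
      exact (((hA2.differentiable two_ne_zero tn).hasDerivAt.mul
        (hy' tn).hasDerivAt)).add (hB2.differentiable two_ne_zero tn).hasDerivAt
    rw [show (2:ℕ) = 1 + 1 from rfl, iteratedDeriv_succ, iteratedDeriv_one]
    conv_lhs => rw [hderiv]
    exact hF.deriv
  -- Taylor remainder for y on [tn, tn+h]
  have hRy : |y (tn + h) - y tn - h * deriv y tn - h ^ 2 / 2 * iteratedDeriv 2 y tn|
      ≤ M * h ^ 3 / 2 := by
    have := taylor2_bound (u := tn) (v := tn + h) (M := M) (by linarith) hy3
      (fun t ht => b9 t ⟨by linarith [ht.1], by linarith [ht.2]⟩)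
    rw [show tn + h - tn = h by ring] at this
    exact this
  -- Taylor for A and B on [tn-h, tn]
  have hXA : |A tn - A (tn - h) - h * deriv A (tn - h)| ≤ M * h ^ 2 := by
    have := taylor1_bound (u := tn - h) (v := tn) (M := M) (by linarith) hA2
      (fun t ht => b7 t ⟨by linarith [ht.1], by linarith [ht.2]⟩)
    rw [show tn - (tn - h) = h by ring] at this
    exact this
  have hXB : |B tn - B (tn - h) - h * deriv B (tn - h)| ≤ M * h ^ 2 := by
    have := taylor1_bound (u := tn - h) (v := tn) (M := M) (by linarith) hB2
      (fun t ht => b8 t ⟨by linarith [ht.1], by linarith [ht.2]⟩)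
    rw [show tn - (tn - h) = h by ring] at this
    exact this
  have h2A : iteratedDeriv 2 A = deriv (deriv A) := by
    rw [show (2:ℕ) = 1 + 1 from rfl, iteratedDeriv_succ, iteratedDeriv_one]
  have h2B : iteratedDeriv 2 B = deriv (deriv B) := by
    rw [show (2:ℕ) = 1 + 1 from rfl, iteratedDeriv_succ, iteratedDeriv_one]
  have hYA : |deriv A tn - deriv A (tn - h)| ≤ M * h := by
    have := lip_bound (u := tn - h) (v := tn) (M := M) (by linarith)
      (hdA1.differentiable one_ne_zero)
      (fun t ht => by rw [← h2A]; exact b7 t ⟨by linarith [ht.1], by linarith [ht.2]⟩)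
    rw [show tn - (tn - h) = h by ring] at this
    exact this
  have hYB : |deriv B tn - deriv B (tn - h)| ≤ M * h := by
    have := lip_bound (u := tn - h) (v := tn) (M := M) (by linarith)
      (hdB1.differentiable one_ne_zero)
      (fun t ht => by rw [← h2B]; exact b8 t ⟨by linarith [ht.1], by linarith [ht.2]⟩)
    rw [show tn - (tn - h) = h by ring] at this
    exact this
  -- epsilon_A, epsilon_B bounds
  have hεA : |α - A tn - h / 2 * deriv A tn| ≤ M * h ^ 2 := by
    have e : α - A tn - h / 2 * deriv A tn =
        1 / 2 * (A tn - A (tn - h) - h * deriv A (tn - h))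
        - h / 2 * (deriv A tn - deriv A (tn - h)) := by rw [hα]; ring
    rw [e]
    have t1 : |1 / 2 * (A tn - A (tn - h) - h * deriv A (tn - h))
        - h / 2 * (deriv A tn - deriv A (tn - h))|
        ≤ |1 / 2 * (A tn - A (tn - h) - h * deriv A (tn - h))|
          + |h / 2 * (deriv A tn - deriv A (tn - h))| := abs_sub _ _
    rw [abs_mul, abs_mul, abs_of_pos (by norm_num : (0:ℝ) < 1/2),
      abs_of_pos (by linarith : (0:ℝ) < h/2)] at t1
    have t2 : h / 2 * |deriv A tn - deriv A (tn - h)| ≤ h / 2 * (M * h) :=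
      mul_le_mul_of_nonneg_left hYA (by linarith)
    linarith [hXA]
  have hεB : |β - B tn - h / 2 * deriv B tn| ≤ M * h ^ 2 := by
    have e : β - B tn - h / 2 * deriv B tn =
        1 / 2 * (B tn - B (tn - h) - h * deriv B (tn - h))
        - h / 2 * (deriv B tn - deriv B (tn - h)) := by rw [hβ]; ring
    rw [e]
    have t1 : |1 / 2 * (B tn - B (tn - h) - h * deriv B (tn - h))
        - h / 2 * (deriv B tn - deriv B (tn - h))|
        ≤ |1 / 2 * (B tn - B (tn - h) - h * deriv B (tn - h))|
          + |h / 2 * (deriv B tn - deriv B (tn - h))| := abs_sub _ _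
    rw [abs_mul, abs_mul, abs_of_pos (by norm_num : (0:ℝ) < 1/2),
      abs_of_pos (by linarith : (0:ℝ) < h/2)] at t1
    have t2 : h / 2 * |deriv B tn - deriv B (tn - h)| ≤ h / 2 * (M * h) :=
      mul_le_mul_of_nonneg_left hYB (by linarith)
    linarith [hXB]
  -- simple bounds
  have hα2M : |α| ≤ 2 * M := by
    rw [hα]
    have := abs_sub (3 / 2 * A tn) (1 / 2 * A (tn - h))
    rw [abs_mul, abs_mul, abs_of_pos (by norm_num : (0:ℝ) < 3/2),
      abs_of_pos (by norm_num : (0:ℝ) < 1/2)] at this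
    have hA0 := b2 tn mtn
    have hAm := b2 (tn - h) mtm
    linarith
  have hβ2M : |β| ≤ 2 * M := by
    rw [hβ]
    have := abs_sub (3 / 2 * B tn) (1 / 2 * B (tn - h))
    rw [abs_mul, abs_mul, abs_of_pos (by norm_num : (0:ℝ) < 3/2),
      abs_of_pos (by norm_num : (0:ℝ) < 1/2)] at this
    have hB0 := b3 tn mtn
    have hBm := b3 (tn - h) mtm
    linarith
  have hPb : |P| ≤ 4 * M ^ 2 := by
    rw [hP]
    have t1 : |α * y tn + β| ≤ |α * y tn| + |β| := abs_add_le _ _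
    rw [abs_mul] at t1
    have hy0 := b1 tn mtn
    have c1 : |α| * |y tn| ≤ 2 * M * M :=
      mul_le_mul hα2M hy0 (abs_nonneg _) (by linarith)
    have c2 : (0:ℝ) ≤ 2 * (M ^ 2 - M) := by nlinarith
    linarith [t1, c1, hβ2M]
  -- phi1 bound
  have hαh : |α * h| ≤ M * T := by
    rw [abs_mul, abs_of_pos hh]
    have c1 : |α| * h ≤ 2 * M * h := mul_le_mul_of_nonneg_right hα2M hh.le
    have c3 : M * (2 * h) ≤ M * T := mul_le_mul_of_nonneg_left h2T (by linarith)
    linarith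
  have hεφ : |φ - 1 - α * h / 2| ≤ 2 * Real.exp (M * T) * M ^ 2 * h ^ 2 := by
    have t1 := phi1_bound hαh
    rw [← hφ] at t1
    have e1 : |α * h| ≤ 2 * M * h := by
      rw [abs_mul, abs_of_pos hh]; exact mul_le_mul_of_nonneg_right hα2M hh.le
    have t2 : (α * h) ^ 2 ≤ 4 * M ^ 2 * h ^ 2 := by
      rw [← sq_abs (α * h)]
      calc |α * h| ^ 2 ≤ (2 * M * h) ^ 2 := pow_le_pow_left₀ (abs_nonneg _) e1 2
        _ = 4 * M ^ 2 * h ^ 2 := by ring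
    have hexp : (0:ℝ) < Real.exp (M * T) := Real.exp_pos _
    calc |φ - 1 - α * h / 2| ≤ Real.exp (M * T) / 2 * (α * h) ^ 2 := t1
      _ ≤ Real.exp (M * T) / 2 * (4 * M ^ 2 * h ^ 2) :=
          mul_le_mul_of_nonneg_left t2 (by positivity)
      _ = 2 * Real.exp (M * T) * M ^ 2 * h ^ 2 := by ring
  -- bounds for the quadratic correction term
  have hαA0 : |α - A tn| ≤ M * h * (1 / 2 + T) := by
    have e : α - A tn = (α - A tn - h / 2 * deriv A tn) + h / 2 * deriv A tn := by ring
    rw [e]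
    have t1 := abs_add_le (α - A tn - h / 2 * deriv A tn) (h / 2 * deriv A tn)
    rw [abs_mul, abs_of_pos (by linarith : (0:ℝ) < h/2)] at t1
    have hA1b := b5 tn mtn
    have hhT : h ≤ T := by linarith
    have c1 : M * h * h ≤ M * h * T :=
      mul_le_mul_of_nonneg_left hhT (mul_nonneg (by linarith) hh.le)
    have c2 : h / 2 * |deriv A tn| ≤ h / 2 * M :=
      mul_le_mul_of_nonneg_left hA1b (by linarith)
    linarith [t1, hεA, c1, c2]
  have hβB0 : |β - B tn| ≤ M * h * (1 / 2 + T) := by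
    have e : β - B tn = (β - B tn - h / 2 * deriv B tn) + h / 2 * deriv B tn := by ring
    rw [e]
    have t1 := abs_add_le (β - B tn - h / 2 * deriv B tn) (h / 2 * deriv B tn)
    rw [abs_mul, abs_of_pos (by linarith : (0:ℝ) < h/2)] at t1
    have hB1b := b6 tn mtn
    have hhT : h ≤ T := by linarith
    have c1 : M * h * h ≤ M * h * T :=
      mul_le_mul_of_nonneg_left hhT (mul_nonneg (by linarith) hh.le)
    have c2 : h / 2 * |deriv B tn| ≤ h / 2 * M :=
      mul_le_mul_of_nonneg_left hB1b (by linarith)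
    linarith [t1, hεB, c1, c2]
  have hPd1 : |P - deriv y tn| ≤ M ^ 2 * (1 + 2 * T) * h := by
    have e : P - deriv y tn = (α - A tn) * y tn + (β - B tn) := by
      rw [hP, hd1]; ring
    rw [e]
    have t1 : |(α - A tn) * y tn + (β - B tn)| ≤ |α - A tn| * |y tn| + |β - B tn| := by
      calc |(α - A tn) * y tn + (β - B tn)| ≤ |(α - A tn) * y tn| + |β - B tn| := abs_add_le _ _
        _ = |α - A tn| * |y tn| + |β - B tn| := by rw [abs_mul]
    have hy0 := b1 tn mtn
    have hnn : (0:ℝ) ≤ M * h * (1 / 2 + T) :=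
      mul_nonneg (mul_nonneg (by linarith) hh.le) (by linarith)
    have c1 : |α - A tn| * |y tn| ≤ M * h * (1 / 2 + T) * M :=
      mul_le_mul hαA0 hy0 (abs_nonneg _) hnn
    have c3 : (0:ℝ) ≤ (M ^ 2 - M) * (h * (1 / 2 + T)) :=
      mul_nonneg (by nlinarith) (mul_nonneg hh.le (by linarith))
    linarith [t1, c1, hβB0, c3]
  have hlast : |α * P - A tn * deriv y tn| ≤ 3 * M ^ 3 * (1 + 2 * T) * h := by
    have e : α * P - A tn * deriv y tn = (α - A tn) * P + A tn * (P - deriv y tn) := by ring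
    rw [e]
    have t1 : |(α - A tn) * P + A tn * (P - deriv y tn)|
        ≤ |α - A tn| * |P| + |A tn| * |P - deriv y tn| := by
      calc |(α - A tn) * P + A tn * (P - deriv y tn)|
          ≤ |(α - A tn) * P| + |A tn * (P - deriv y tn)| := abs_add_le _ _
        _ = |α - A tn| * |P| + |A tn| * |P - deriv y tn| := by rw [abs_mul, abs_mul]
    have hA0 := b2 tn mtn
    have t2 : |α - A tn| * |P| ≤ (M * h * (1 / 2 + T)) * (4 * M ^ 2) :=
      mul_le_mul hαA0 hPb (abs_nonneg _)
        (mul_nonneg (mul_nonneg (by linarith) hh.le) (by linarith))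
    have t3 : |A tn| * |P - deriv y tn| ≤ M * (M ^ 2 * (1 + 2 * T) * h) :=
      mul_le_mul hA0 hPd1 (abs_nonneg _) (by linarith)
    linarith [t1, t2, t3]
  -- key algebraic identity
  have key : y tn + h * φ * P - y (tn + h) =
      -(y (tn + h) - y tn - h * deriv y tn - h ^ 2 / 2 * iteratedDeriv 2 y tn)
      + h * ((α - A tn - h / 2 * deriv A tn) * y tn + (β - B tn - h / 2 * deriv B tn))
      + h * ((φ - 1 - α * h / 2) * P)
      + h ^ 2 / 2 * (α * P - A tn * deriv y tn) := by
    rw [hd2, hd1, hP]; ring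
  -- conclusion
  have tri : |y tn + h * φ * P - y (tn + h)| ≤
      |y (tn + h) - y tn - h * deriv y tn - h ^ 2 / 2 * iteratedDeriv 2 y tn|
      + h * |(α - A tn - h / 2 * deriv A tn) * y tn + (β - B tn - h / 2 * deriv B tn)|
      + h * (|φ - 1 - α * h / 2| * |P|)
      + h ^ 2 / 2 * |α * P - A tn * deriv y tn| := by
    rw [key]
    have s1 := abs_add_le
      (-(y (tn + h) - y tn - h * deriv y tn - h ^ 2 / 2 * iteratedDeriv 2 y tn)
        + h * ((α - A tn - h / 2 * deriv A tn) * y tn + (β - B tn - h / 2 * deriv B tn))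
        + h * ((φ - 1 - α * h / 2) * P))
      (h ^ 2 / 2 * (α * P - A tn * deriv y tn))
    have s2 := abs_add_le
      (-(y (tn + h) - y tn - h * deriv y tn - h ^ 2 / 2 * iteratedDeriv 2 y tn)
        + h * ((α - A tn - h / 2 * deriv A tn) * y tn + (β - B tn - h / 2 * deriv B tn)))
      (h * ((φ - 1 - α * h / 2) * P))
    have s3 := abs_add_le
      (-(y (tn + h) - y tn - h * deriv y tn - h ^ 2 / 2 * iteratedDeriv 2 y tn))
      (h * ((α - A tn - h / 2 * deriv A tn) * y tn + (β - B tn - h / 2 * deriv B tn)))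
    rw [abs_neg] at s3
    rw [abs_mul (h ^ 2 / 2), abs_of_pos (by positivity : (0:ℝ) < h ^ 2 / 2)] at s1
    rw [abs_mul h ((φ - 1 - α * h / 2) * P), abs_mul (φ - 1 - α * h / 2) P,
      abs_of_pos hh] at s2
    rw [abs_mul h ((α - A tn - h / 2 * deriv A tn) * y tn
      + (β - B tn - h / 2 * deriv B tn)), abs_of_pos hh] at s3
    linarith
  have hε1 : |(α - A tn - h / 2 * deriv A tn) * y tn + (β - B tn - h / 2 * deriv B tn)|
      ≤ 2 * M ^ 2 * h ^ 2 := by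
    have t1 : |(α - A tn - h / 2 * deriv A tn) * y tn + (β - B tn - h / 2 * deriv B tn)|
        ≤ |α - A tn - h / 2 * deriv A tn| * |y tn| + |β - B tn - h / 2 * deriv B tn| := by
      calc _ ≤ |(α - A tn - h / 2 * deriv A tn) * y tn|
            + |β - B tn - h / 2 * deriv B tn| := abs_add_le _ _
        _ = _ := by rw [abs_mul]
    have hy0 := b1 tn mtn
    have c1 : |α - A tn - h / 2 * deriv A tn| * |y tn| ≤ M * h ^ 2 * M :=
      mul_le_mul hεA hy0 (abs_nonneg _) (mul_nonneg (by linarith) (sq_nonneg h))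
    have c3 : (0:ℝ) ≤ (M ^ 2 - M) * h ^ 2 := mul_nonneg (by nlinarith) (sq_nonneg h)
    linarith [t1, c1, hεB, c3]
  calc |y tn + h * φ * P - y (tn + h)|
      ≤ |y (tn + h) - y tn - h * deriv y tn - h ^ 2 / 2 * iteratedDeriv 2 y tn|
        + h * |(α - A tn - h / 2 * deriv A tn) * y tn + (β - B tn - h / 2 * deriv B tn)|
        + h * (|φ - 1 - α * h / 2| * |P|)
        + h ^ 2 / 2 * |α * P - A tn * deriv y tn| := tri
    _ ≤ M * h ^ 3 / 2 + h * (2 * M ^ 2 * h ^ 2)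
        + h * ((2 * Real.exp (M * T) * M ^ 2 * h ^ 2) * (4 * M ^ 2))
        + h ^ 2 / 2 * (3 * M ^ 3 * (1 + 2 * T) * h) := by
        gcongr
    _ = (M / 2 + 2 * M ^ 2 + 8 * Real.exp (M * T) * M ^ 4
        + 3 / 2 * M ^ 3 * (1 + 2 * T)) * h ^ 3 := by ring
private lemma bnd_helper {f : ℝ → ℝ} {s : Set ℝ} {c R : ℝ}
    (hc : ∀ t ∈ s, ‖f t‖ ≤ c) (hR : |c| ≤ R) : ∀ t ∈ s, |f t| ≤ R := fun t ht => by
  have := hc t ht; rw [Real.norm_eq_abs] at this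
  exact this.trans ((le_abs_self c).trans hR)

open Set in
/-- order-2 consistency of the Perego–Veneziani (RL₂) scheme
for the scalar ODE y' = a(t,y)y + b(t,y). -/
theorem rl2_consistency (a b : ℝ → ℝ → ℝ) (y : ℝ → ℝ) (T : ℝ) (hT : 0 < T)
    (ha : ContDiff ℝ 2 (Function.uncurry a)) (hb : ContDiff ℝ 2 (Function.uncurry b))
    (haM : ∀ i : ℕ, i ≤ 2 → ∃ M, ∀ p : ℝ × ℝ, ‖iteratedFDeriv ℝ i (Function.uncurry a) p‖ ≤ M)
    (hbM : ∀ i : ℕ, i ≤ 2 → ∃ M, ∀ p : ℝ × ℝ, ‖iteratedFDeriv ℝ i (Function.uncurry b) p‖ ≤ M)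
    (hy : ∀ t, HasDerivAt y (a t (y t) * y t + b t (y t)) t) :
    ∃ C : ℝ, ∀ h tn : ℝ, 0 < h → h ≤ tn → tn ≤ T - h →
      |(y tn + h * phi1 ((3 / 2 * a tn (y tn) - 1 / 2 * a (tn - h) (y (tn - h))) * h) *
            ((3 / 2 * a tn (y tn) - 1 / 2 * a (tn - h) (y (tn - h))) * y tn +
              (3 / 2 * b tn (y tn) - 1 / 2 * b (tn - h) (y (tn - h))))) -
          y (tn + h)| ≤ C * h ^ 3 := by
  classical
  set A : ℝ → ℝ := fun t => a t (y t) with hAdef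
  set B : ℝ → ℝ := fun t => b t (y t) with hBdef
  have hy' : Differentiable ℝ y := fun t => (hy t).differentiableAt
  have hyc : Continuous y := hy'.continuous
  have hderiv : deriv y = fun t => A t * y t + B t := funext fun t => (hy t).deriv
  have hAc : Continuous A := ha.continuous.comp (continuous_id.prodMk hyc)
  have hBc : Continuous B := hb.continuous.comp (continuous_id.prodMk hyc)
  have hy1 : ContDiff ℝ 1 y := contDiff_one_iff_deriv.mpr
    ⟨hy', by rw [hderiv]; exact (hAc.mul hyc).add hBc⟩
  have hA1 : ContDiff ℝ 1 A := (ha.of_le one_le_two).comp (contDiff_id.prodMk hy1)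
  have hB1 : ContDiff ℝ 1 B := (hb.of_le one_le_two).comp (contDiff_id.prodMk hy1)
  have hy2 : ContDiff ℝ 2 y := by
    rw [show (2 : WithTop ℕ∞) = 1 + 1 by norm_num, contDiff_succ_iff_deriv]
    exact ⟨hy', by simp, by rw [hderiv]; exact (hA1.mul hy1).add hB1⟩
  have hA2 : ContDiff ℝ 2 A := ha.comp (contDiff_id.prodMk hy2)
  have hB2 : ContDiff ℝ 2 B := hb.comp (contDiff_id.prodMk hy2)
  have hy3 : ContDiff ℝ 3 y := by
    rw [show (3 : WithTop ℕ∞) = 2 + 1 by norm_num, contDiff_succ_iff_deriv]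
    exact ⟨hy', by simp, by rw [hderiv]; exact (hA2.mul hy2).add hB2⟩
  have hdA1 : ContDiff ℝ 1 (deriv A) := by
    have hA2'' : ContDiff ℝ (1 + 1) A := by
      rw [show (1 + 1 : WithTop ℕ∞) = 2 by norm_num]; exact hA2
    exact (contDiff_succ_iff_deriv.mp hA2'').2.2
  have hdB1 : ContDiff ℝ 1 (deriv B) := by
    have hB2'' : ContDiff ℝ (1 + 1) B := by
      rw [show (1 + 1 : WithTop ℕ∞) = 2 by norm_num]; exact hB2
    exact (contDiff_succ_iff_deriv.mp hB2'').2.2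
  have hdyc : Continuous (deriv y) := by rw [hderiv]; exact (hAc.mul hyc).add hBc
  have hcpt : IsCompact (Icc (0:ℝ) T) := isCompact_Icc
  obtain ⟨C1, hC1⟩ := hcpt.exists_bound_of_continuousOn hyc.continuousOn
  obtain ⟨C2, hC2⟩ := hcpt.exists_bound_of_continuousOn hAc.continuousOn
  obtain ⟨C3, hC3⟩ := hcpt.exists_bound_of_continuousOn hBc.continuousOn
  obtain ⟨C5, hC5⟩ := hcpt.exists_bound_of_continuousOn hdA1.continuous.continuousOn
  obtain ⟨C6, hC6⟩ := hcpt.exists_bound_of_continuousOn hdB1.continuous.continuousOn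
  obtain ⟨C7, hC7⟩ := hcpt.exists_bound_of_continuousOn
    (hA2.continuous_iteratedDeriv 2 le_rfl).continuousOn
  obtain ⟨C8, hC8⟩ := hcpt.exists_bound_of_continuousOn
    (hB2.continuous_iteratedDeriv 2 le_rfl).continuousOn
  obtain ⟨C9, hC9⟩ := hcpt.exists_bound_of_continuousOn
    (hy3.continuous_iteratedDeriv 3 le_rfl).continuousOn
  obtain ⟨M, hM1, b1, b2, b3, b5, b6, b7, b8, b9⟩ :
      ∃ M : ℝ, 1 ≤ M ∧ (∀ t ∈ Icc (0:ℝ) T, |y t| ≤ M) ∧ (∀ t ∈ Icc (0:ℝ) T, |A t| ≤ M)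
        ∧ (∀ t ∈ Icc (0:ℝ) T, |B t| ≤ M)
        ∧ (∀ t ∈ Icc (0:ℝ) T, |deriv A t| ≤ M) ∧ (∀ t ∈ Icc (0:ℝ) T, |deriv B t| ≤ M)
        ∧ (∀ t ∈ Icc (0:ℝ) T, |iteratedDeriv 2 A t| ≤ M)
        ∧ (∀ t ∈ Icc (0:ℝ) T, |iteratedDeriv 2 B t| ≤ M)
        ∧ (∀ t ∈ Icc (0:ℝ) T, |iteratedDeriv 3 y t| ≤ M) := by
    have n1 := abs_nonneg C1; have n2 := abs_nonneg C2; have n3 := abs_nonneg C3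
    have n5 := abs_nonneg C5; have n6 := abs_nonneg C6; have n7 := abs_nonneg C7
    have n8 := abs_nonneg C8; have n9 := abs_nonneg C9
    refine ⟨1 + |C1| + |C2| + |C3| + |C5| + |C6| + |C7| + |C8| + |C9|, by linarith,
      bnd_helper hC1 (by linarith), bnd_helper hC2 (by linarith),
      bnd_helper hC3 (by linarith), bnd_helper hC5 (by linarith),
      bnd_helper hC6 (by linarith), bnd_helper hC7 (by linarith),
      bnd_helper hC8 (by linarith), bnd_helper hC9 (by linarith)⟩
  refine ⟨M / 2 + 2 * M ^ 2 + 8 * Real.exp (M * T) * M ^ 4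
    + 3 / 2 * M ^ 3 * (1 + 2 * T), ?_⟩
  intro h tn hh ht1 ht2
  exact main_est A B y T M h tn hh ht1 ht2 hy3 hA2 hB2 hderiv hM1 b1 b2 b3 b5 b6 b7 b8 b9
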